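/- arXiv:1901.01258 — 2 statements merged into one kernel-verified Lean document; each statement's English description precedes it below -/
import Mathlib

section
/- Let α ≥ 1 be a real number and let A = (a_n(i)) be a G∞-matrix. Then the following are equivalent: (1) (GPC) holds, i.e. for every n there exists m > n with ∑_{i=1}^∞ a_n(i)/a_m(i) < ∞; (2) there exists n with lim_{i→∞} i^α·v_n(i) = 0; (3) there exists n such that lim_{i→∞} i^α·v_n(i) exists and is finite. -/
open Filter

/-- `a` is a G∞-matrix (indices range over positive integers). -/
def IsGinfMatrix (a : ℕ → ℕ → ℝ) : Prop :=
  (∀ n i, 0 < n → 0 < i → a n i ≤ a (n + 1) i) ∧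
  (∀ n i, 0 < n → 0 < i → 1 ≤ a n i ∧ a n i ≤ a n (i + 1)) ∧
  (∀ n, 0 < n → ∃ m, n < m ∧ ∃ M : ℝ, 0 < M ∧ ∀ i, 0 < i → (a n i) ^ 2 ≤ M * a m i)

section Aux

variable {a : ℕ → ℕ → ℝ}

lemma Ginf.one_le (hA : IsGinfMatrix a) {n i : ℕ} (hn : 0 < n) (hi : 0 < i) :
    1 ≤ a n i := (hA.2.1 n i hn hi).1

lemma Ginf.pos (hA : IsGinfMatrix a) {n i : ℕ} (hn : 0 < n) (hi : 0 < i) :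
    0 < a n i := lt_of_lt_of_le one_pos (Ginf.one_le hA hn hi)

lemma Ginf.mono_n (hA : IsGinfMatrix a) {n m i : ℕ} (hn : 0 < n) (hnm : n ≤ m) (hi : 0 < i) :
    a n i ≤ a m i := by
  induction m, hnm using Nat.le_induction with
  | base => exact le_refl _
  | succ m hm ih => exact ih.trans (hA.1 m i (lt_of_lt_of_le hn hm) hi)

lemma Ginf.mono_i (hA : IsGinfMatrix a) {n i j : ℕ} (hn : 0 < n) (hi : 0 < i) (hij : i ≤ j) :
    a n i ≤ a n j := by
  induction j, hij using Nat.le_induction with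
  | base => exact le_refl _
  | succ j hj ih => exact ih.trans (hA.2.1 n j hn (lt_of_lt_of_le hi hj)).2

/-- Pringsheim: a nonnegative antitone summable sequence satisfies `n * f n → 0`. -/
lemma pringsheim {f : ℕ → ℝ} (h0 : ∀ n, 0 ≤ f n) (hanti : Antitone f) (hs : Summable f) :
    Tendsto (fun n : ℕ => (n : ℝ) * f n) atTop (nhds 0) := by
  rw [NormedAddCommGroup.tendsto_nhds_zero]
  intro ε hε
  obtain ⟨N, hN⟩ : ∃ N : ℕ, ∑' k, f (k + N) < ε / 2 :=
    ((tendsto_sum_nat_add f).eventually (gt_mem_nhds (by linarith : (0:ℝ) < ε / 2))).exists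
  have hsN : Summable fun k => f (k + N) := (summable_nat_add_iff N).2 hs
  have hsmall : ∀ᶠ n in atTop, f n < ε / (2 * ((N : ℝ) + 1)) :=
    hs.tendsto_atTop_zero.eventually (gt_mem_nhds (by positivity))
  filter_upwards [hsmall, eventually_ge_atTop N] with n hfn hnN
  have key : ((n - N : ℕ) : ℝ) * f n ≤ ε / 2 := by
    have h1 : (Finset.Ico N n).card • f n ≤ ∑ k ∈ Finset.Ico N n, f k :=
      Finset.card_nsmul_le_sum _ _ _ fun k hk => hanti (Finset.mem_Ico.mp hk).2.le
    have h2 : ∑ k ∈ Finset.Ico N n, f k ≤ ∑' k, f (k + N) := by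
      rw [Finset.sum_Ico_eq_sum_range]
      calc ∑ k ∈ Finset.range (n - N), f (N + k)
          = ∑ k ∈ Finset.range (n - N), f (k + N) := by
            refine Finset.sum_congr rfl fun k _ => by rw [add_comm]
        _ ≤ ∑' k, f (k + N) := Summable.sum_le_tsum _ (fun i _ => h0 _) hsN
    have h3 : (Finset.Ico N n).card = n - N := Nat.card_Ico N n
    rw [h3, nsmul_eq_mul] at h1
    exact h1.trans (h2.trans hN.le)
  have hcast : ((n - N : ℕ) : ℝ) = (n : ℝ) - N := by
    rw [Nat.cast_sub hnN]
  rw [hcast] at key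
  have hb2 : (N : ℝ) * f n < ε / 2 := by
    have hbpos : (0:ℝ) < ε / (2 * ((N : ℝ) + 1)) := by positivity
    calc (N : ℝ) * f n ≤ (N : ℝ) * (ε / (2 * ((N : ℝ) + 1))) :=
          mul_le_mul_of_nonneg_left hfn.le (Nat.cast_nonneg N)
      _ < ((N : ℝ) + 1) * (ε / (2 * ((N : ℝ) + 1))) :=
          mul_lt_mul_of_pos_right (by linarith) hbpos
      _ = ε / 2 := by
          field_simp
  have hnn : 0 ≤ (n : ℝ) * f n := mul_nonneg (Nat.cast_nonneg n) (h0 n)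
  rw [Real.norm_eq_abs, abs_of_nonneg hnn]
  nlinarith [key, hb2]

/-- boosting the polynomial decay rate using (G∞-2). -/
lemma Ginf.boost (hA : IsGinfMatrix a) {n : ℕ} (hn : 0 < n) {β C : ℝ}
    (h : ∀ᶠ i : ℕ in atTop, (i : ℝ) ^ β * (a n i)⁻¹ ≤ C) :
    ∃ m, n < m ∧ ∃ C' : ℝ, ∀ᶠ i : ℕ in atTop, (i : ℝ) ^ (2 * β) * (a m i)⁻¹ ≤ C' := by
  obtain ⟨m, hnm, M, hM, hsq⟩ := hA.2.2 n hn
  refine ⟨m, hnm, M * C ^ 2, ?_⟩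
  filter_upwards [h, eventually_ge_atTop 1] with i hi h1
  have hi0 : 0 < i := h1
  have hipos : (0:ℝ) < (i : ℝ) := by exact_mod_cast hi0
  have han : 0 < a n i := Ginf.pos hA hn hi0
  have ham : 0 < a m i := Ginf.pos hA (lt_trans hn hnm) hi0
  have h2 : (a n i) ^ 2 ≤ M * a m i := hsq i hi0
  have hinv : (a m i)⁻¹ ≤ M * ((a n i)⁻¹) ^ 2 := by
    have h3 : (0:ℝ) < (a n i) ^ 2 := by positivity
    have hgoal : 1 / a m i ≤ M / (a n i) ^ 2 := by
      rw [div_le_div_iff₀ ham h3]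
      linarith
    calc (a m i)⁻¹ = 1 / a m i := (one_div _).symm
      _ ≤ M / (a n i) ^ 2 := hgoal
      _ = M * ((a n i)⁻¹) ^ 2 := by rw [div_eq_mul_inv, inv_pow]
  calc (i : ℝ) ^ (2 * β) * (a m i)⁻¹
      ≤ (i : ℝ) ^ (2 * β) * (M * ((a n i)⁻¹) ^ 2) :=
        mul_le_mul_of_nonneg_left hinv (Real.rpow_nonneg (Nat.cast_nonneg i) _)
    _ = M * ((i : ℝ) ^ β * (a n i)⁻¹) ^ 2 := by
        have hsplit : (i : ℝ) ^ (2 * β) = (i : ℝ) ^ β * (i : ℝ) ^ β := by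
          rw [two_mul, Real.rpow_add hipos]
        rw [hsplit]; ring
    _ ≤ M * C ^ 2 := by
        have hX0 : 0 ≤ (i : ℝ) ^ β * (a n i)⁻¹ :=
          mul_nonneg (Real.rpow_nonneg (Nat.cast_nonneg i) _) (inv_nonneg.2 han.le)
        exact mul_le_mul_of_nonneg_left (pow_le_pow_left₀ hX0 hi 2) hM.le

/-- iterate the boost: from decay of order `1` to decay of order `2^k`. -/
lemma Ginf.iter (hA : IsGinfMatrix a)
    (base : ∃ n, 0 < n ∧ ∃ C : ℝ, ∀ᶠ i : ℕ in atTop, (i : ℝ) ^ (1 : ℝ) * (a n i)⁻¹ ≤ C)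
    (k : ℕ) :
    ∃ n, 0 < n ∧ ∃ C : ℝ, ∀ᶠ i : ℕ in atTop, (i : ℝ) ^ ((2:ℝ) ^ k) * (a n i)⁻¹ ≤ C := by
  induction k with
  | zero => simpa using base
  | succ k ih =>
    obtain ⟨n, hn, C, hC⟩ := ih
    obtain ⟨m, hm, C', hC'⟩ := Ginf.boost hA hn hC
    refine ⟨m, lt_trans hn hm, C', ?_⟩
    have : (2:ℝ) ^ (k + 1) = 2 * (2:ℝ) ^ k := by ring
    rw [this]
    exact hC'

/-- From a decay of order `1` we obtain `i ^ α * v n i → 0` for some `n`, for any real `α`. -/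
lemma Ginf.tendsto_of_base (hA : IsGinfMatrix a) (α : ℝ)
    (base : ∃ n, 0 < n ∧ ∃ C : ℝ, ∀ᶠ i : ℕ in atTop, (i : ℝ) ^ (1 : ℝ) * (a n i)⁻¹ ≤ C) :
    ∃ n, 0 < n ∧ Tendsto (fun i : ℕ => (i : ℝ) ^ α * (a n i)⁻¹) atTop (nhds 0) := by
  obtain ⟨k, hk⟩ := pow_unbounded_of_one_lt α (by norm_num : (1:ℝ) < 2)
  obtain ⟨n, hn, C, hC⟩ := Ginf.iter hA base k
  refine ⟨n, hn, ?_⟩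
  set β : ℝ := (2:ℝ) ^ k with hβ
  have hαβ : α - β < 0 := by linarith
  apply squeeze_zero' (g := fun i : ℕ => C * (i : ℝ) ^ (α - β))
  · filter_upwards [eventually_ge_atTop 1] with i hi
    have han : 0 < a n i := Ginf.pos hA hn hi
    exact mul_nonneg (Real.rpow_nonneg (Nat.cast_nonneg i) _) (inv_nonneg.2 han.le)
  · filter_upwards [hC, eventually_ge_atTop 1] with i hCi hi
    have hipos : (0:ℝ) < (i : ℝ) := by exact_mod_cast hi
    have han : 0 < a n i := Ginf.pos hA hn hi
    have hsplit : (i : ℝ) ^ α = (i : ℝ) ^ (α - β) * (i : ℝ) ^ β := by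
      rw [← Real.rpow_add hipos]; ring_nf
    calc (i : ℝ) ^ α * (a n i)⁻¹
        = (i : ℝ) ^ (α - β) * ((i : ℝ) ^ β * (a n i)⁻¹) := by rw [hsplit]; ring
      _ ≤ (i : ℝ) ^ (α - β) * C :=
          mul_le_mul_of_nonneg_left hCi (Real.rpow_nonneg (Nat.cast_nonneg i) _)
      _ = C * (i : ℝ) ^ (α - β) := by ring
  · have h1 : Tendsto (fun x : ℝ => x ^ (-(β - α))) atTop (nhds 0) :=
      tendsto_rpow_neg_atTop (by linarith)
    have h2 : Tendsto (fun i : ℕ => ((i : ℝ)) ^ (-(β - α))) atTop (nhds 0) :=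
      h1.comp tendsto_natCast_atTop_atTop
    have h3 : Tendsto (fun i : ℕ => C * ((i : ℝ)) ^ (-(β - α))) atTop (nhds (C * 0)) :=
      h2.const_mul C
    rw [mul_zero] at h3
    have : (fun i : ℕ => C * (i : ℝ) ^ (α - β)) = fun i : ℕ => C * ((i : ℝ)) ^ (-(β - α)) := by
      funext i; ring_nf
    rw [this]
    exact h3

end Aux

/-- For a real `α ≥ 1` and a G∞-matrix, (GPC) is equivalent to the existence of `n` with
`i^α·v_n(i) → 0`, and also to the existence of `n` such that `i^α·v_n(i)` has a finite limit,
where `v n i = (a n i)⁻¹`. -/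
theorem stmt_6 (α : ℝ) (hα : 1 ≤ α) (a : ℕ → ℕ → ℝ) (hA : IsGinfMatrix a) :
    List.TFAE
      [∀ n, 0 < n → ∃ m, n < m ∧ Summable (fun i : ℕ => a n (i + 1) / a m (i + 1)),
       ∃ n, 0 < n ∧ Tendsto (fun i : ℕ => (i : ℝ) ^ α * (a n i)⁻¹) atTop (nhds 0),
       ∃ n, 0 < n ∧ ∃ L : ℝ, Tendsto (fun i : ℕ => (i : ℝ) ^ α * (a n i)⁻¹) atTop (nhds L)] := by
  tfae_have 1 → 2
  · intro h1
    obtain ⟨m, hm1, hsum⟩ := h1 1 one_pos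
    have hm0 : 0 < m := lt_trans one_pos hm1
    set f : ℕ → ℝ := fun i => (a m (i + 1))⁻¹ with hf
    have hfpos : ∀ i, 0 ≤ f i := fun i =>
      inv_nonneg.2 (Ginf.pos hA hm0 (Nat.succ_pos i)).le
    have hfle : ∀ i, f i ≤ a 1 (i + 1) / a m (i + 1) := by
      intro i
      have hmpos : 0 < a m (i + 1) := Ginf.pos hA hm0 (Nat.succ_pos i)
      have h1le : 1 ≤ a 1 (i + 1) := Ginf.one_le hA one_pos (Nat.succ_pos i)
      calc f i = 1 / a m (i + 1) := (one_div _).symm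
        _ ≤ a 1 (i + 1) / a m (i + 1) := (div_le_div_iff_of_pos_right hmpos).2 h1le
    have hfs : Summable f := Summable.of_nonneg_of_le hfpos hfle hsum
    have hfanti : Antitone f := by
      intro i j hij
      have h := Ginf.mono_i hA hm0 (Nat.succ_pos i) (Nat.succ_le_succ hij)
      exact inv_anti₀ (Ginf.pos hA hm0 (Nat.succ_pos i)) h
    have hprin := pringsheim hfpos hfanti hfs
    have hev : ∀ᶠ j : ℕ in atTop, (j : ℝ) * f j ≤ 1 :=
      hprin.eventually_le_const one_pos
    obtain ⟨N, hN⟩ := eventually_atTop.mp hev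
    have base : ∃ n, 0 < n ∧ ∃ C : ℝ, ∀ᶠ i : ℕ in atTop, (i : ℝ) ^ (1:ℝ) * (a n i)⁻¹ ≤ C := by
      refine ⟨m, hm0, 2, eventually_atTop.2 ⟨N + 1, fun i hi => ?_⟩⟩
      obtain ⟨j, rfl⟩ : ∃ j, i = j + 1 := ⟨i - 1, by omega⟩
      have hjN : N ≤ j := by omega
      have hfj1 : f j ≤ 1 := inv_le_one_of_one_le₀ (Ginf.one_le hA hm0 (Nat.succ_pos j))
      have hkey : ((j : ℝ) + 1) * (a m (j + 1))⁻¹ = (j : ℝ) * f j + f j := by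
        simp only [hf]; ring
      rw [Real.rpow_one]
      push_cast
      rw [hkey]
      have := hN j hjN
      linarith
    exact Ginf.tendsto_of_base hA α base
  tfae_have 2 → 3
  · rintro ⟨n, hn, h⟩
    exact ⟨n, hn, 0, h⟩
  tfae_have 3 → 1
  · rintro ⟨n₀, hn₀, L, hL⟩
    have hb0 : ∀ᶠ i : ℕ in atTop, (i : ℝ) ^ α * (a n₀ i)⁻¹ ≤ L + 1 :=
      hL.eventually_le_const (lt_add_one L)
    obtain ⟨n₁, hn₀₁, C, hC⟩ := Ginf.boost hA hn₀ hb0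
    have hn₁ : 0 < n₁ := lt_trans hn₀ hn₀₁
    intro n hn
    set n' := max n n₁ with hn'def
    have hn' : 0 < n' := lt_of_lt_of_le hn (le_max_left n n₁)
    obtain ⟨m, hm, M, hM, hsq⟩ := hA.2.2 n' hn'
    have hmn : n < m := lt_of_le_of_lt (le_max_left n n₁) hm
    have hm0 : 0 < m := lt_of_lt_of_le hn' hm.le
    refine ⟨m, hmn, ?_⟩
    obtain ⟨N, hN⟩ := eventually_atTop.mp hC
    have hC0 : 0 ≤ C := by
      have hq := hN (max N 1) (le_max_left _ _)
      have h1 : 0 < a n₁ (max N 1) :=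
        Ginf.pos hA hn₁ (lt_of_lt_of_le one_pos (le_max_right _ _))
      have h2 : 0 ≤ ((max N 1 : ℕ) : ℝ) ^ (2 * α) * (a n₁ (max N 1))⁻¹ :=
        mul_nonneg (Real.rpow_nonneg (Nat.cast_nonneg _) _) (inv_nonneg.2 h1.le)
      linarith
    set K := max N 1 with hKdef
    rw [← summable_nat_add_iff K]
    have hsummg : Summable fun i : ℕ => (M * C) * (((i + K : ℕ) : ℝ)) ^ (-(2 * α)) := by
      have h1 : Summable fun i : ℕ => ((i : ℝ)) ^ (-(2 * α)) :=
        Real.summable_nat_rpow.2 (by linarith)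
      exact ((summable_nat_add_iff K).2 h1).mul_left _
    apply Summable.of_nonneg_of_le _ _ hsummg
    · intro i
      have h1 : 0 < a m (i + K + 1) := Ginf.pos hA hm0 (Nat.succ_pos _)
      have h2 : 0 ≤ a n (i + K + 1) := (Ginf.pos hA hn (Nat.succ_pos _)).le
      exact div_nonneg h2 h1.le
    · intro i
      set j := i + K + 1 with hjdef
      have hj0 : 0 < j := Nat.succ_pos _
      have hjN : N ≤ j := by omega
      have hjpos : (0:ℝ) < (j : ℝ) := by exact_mod_cast hj0
      have han : 0 < a n j := Ginf.pos hA hn hj0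
      have han' : 0 < a n' j := Ginf.pos hA hn' hj0
      have han₁ : 0 < a n₁ j := Ginf.pos hA hn₁ hj0
      have ham : 0 < a m j := Ginf.pos hA hm0 hj0
      have s1 : a n j / a m j ≤ a n' j / a m j :=
        (div_le_div_iff_of_pos_right ham).2 (Ginf.mono_n hA hn (le_max_left n n₁) hj0)
      have s2 : a n' j / a m j ≤ M / a n' j := by
        rw [div_le_div_iff₀ ham han']
        have := hsq j hj0
        nlinarith
      have s3 : M / a n' j ≤ M * (a n₁ j)⁻¹ := by
        rw [div_eq_mul_inv]
        refine mul_le_mul_of_nonneg_left ?_ hM.le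
        exact inv_anti₀ han₁ (Ginf.mono_n hA hn₁ (le_max_right n n₁) hj0)
      have s4 : (a n₁ j)⁻¹ ≤ C * ((j : ℝ)) ^ (-(2 * α)) := by
        have hb := hN j hjN
        have hrw : (a n₁ j)⁻¹ =
            ((j : ℝ)) ^ (-(2 * α)) * (((j : ℝ)) ^ (2 * α) * (a n₁ j)⁻¹) := by
          rw [← mul_assoc, ← Real.rpow_add hjpos]
          norm_num
        rw [hrw]
        calc ((j : ℝ)) ^ (-(2 * α)) * (((j : ℝ)) ^ (2 * α) * (a n₁ j)⁻¹)
            ≤ ((j : ℝ)) ^ (-(2 * α)) * C :=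
              mul_le_mul_of_nonneg_left hb (Real.rpow_nonneg hjpos.le _)
          _ = C * ((j : ℝ)) ^ (-(2 * α)) := by ring
      have s5 : ((j : ℝ)) ^ (-(2 * α)) ≤ (((i + K : ℕ) : ℝ)) ^ (-(2 * α)) := by
        apply Real.rpow_le_rpow_of_nonpos
        · have : (0:ℕ) < i + K := by omega
          exact_mod_cast this
        · have : (i + K : ℕ) ≤ j := by omega
          exact_mod_cast this
        · linarith
      calc a n j / a m j ≤ a n' j / a m j := s1
        _ ≤ M / a n' j := s2
        _ ≤ M * (a n₁ j)⁻¹ := s3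
        _ ≤ M * (C * ((j : ℝ)) ^ (-(2 * α))) :=
            mul_le_mul_of_nonneg_left s4 hM.le
        _ ≤ M * (C * (((i + K : ℕ) : ℝ)) ^ (-(2 * α)))  := by
            exact mul_le_mul_of_nonneg_left
              (mul_le_mul_of_nonneg_left s5 hC0) hM.le
        _ = (M * C) * (((i + K : ℕ) : ℝ)) ^ (-(2 * α)) := by ring
  tfae_finish
end

section
/- Let A = (a_n(i)) be a G∞-matrix satisfying (S): for every n there exists m > n with lim_{i→∞} a_n(i)/a_m(i) = 0. Then the following are equivalent: (1) (N) for every n there exists m > n with sup_i i·v_m(i)/v_n(i) < ∞; (2) there exists n with lim_{i→∞} i·v_n(i) = 0; (3) there exist a positive integer s and an n with lim_{i→∞} i^s·v_n(i) = 0; (4) for every positive integer s there exists n with lim_{i→∞} i^s·v_n(i) = 0. (In spectral terms: 0 ∉ σ(𝖢;k₀(V)) iff 1/2 ∈ σ_pt(𝖢;k₀(V)) iff some 1/(s+1) is in σ_pt iff σ_pt(𝖢;k₀(V)) = {1/m : m ∈ ℕ}.) -/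
open Filter

lemma ginf_one_le {a : ℕ → ℕ → ℝ} (hA : IsGinfMatrix a) {n i : ℕ} (hn : 0 < n) (hi : 0 < i) :
    1 ≤ a n i := (hA.2.1 n i hn hi).1

lemma ginf_mono {a : ℕ → ℕ → ℝ} (hA : IsGinfMatrix a) {n m : ℕ} (hn : 0 < n) (hnm : n ≤ m)
    {i : ℕ} (hi : 0 < i) : a n i ≤ a m i := by
  induction m, hnm using Nat.le_induction with
  | base => exact le_refl _
  | succ m hm ih => exact ih.trans (hA.1 m i (hn.trans_le hm) hi)

/-- doubling step from (G∞-2) -/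
lemma ginf_double {a : ℕ → ℕ → ℝ} (hA : IsGinfMatrix a) (e : ℕ) {n : ℕ} (hn : 0 < n)
    (h : Tendsto (fun i : ℕ => (i : ℝ) ^ e * (a n i)⁻¹) atTop (nhds 0)) :
    ∃ m, n < m ∧ Tendsto (fun i : ℕ => (i : ℝ) ^ (2 * e) * (a m i)⁻¹) atTop (nhds 0) := by
  obtain ⟨m, hnm, M, hM, hMa⟩ := hA.2.2 n hn
  refine ⟨m, hnm, ?_⟩
  have hg : Tendsto (fun i : ℕ => M * ((i : ℝ) ^ e * (a n i)⁻¹) ^ 2) atTop (nhds 0) := by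
    have := ((h.pow 2).const_mul M)
    simpa using this
  refine squeeze_zero' ?_ ?_ hg
  · filter_upwards [eventually_gt_atTop 0] with i hi
    have h1 : (1 : ℝ) ≤ a m i := ginf_one_le hA (hn.trans hnm) hi
    positivity
  · filter_upwards [eventually_gt_atTop 0] with i hi
    have h1 : (1 : ℝ) ≤ a n i := ginf_one_le hA hn hi
    have h2 : (1 : ℝ) ≤ a m i := ginf_one_le hA (hn.trans hnm) hi
    have h3 := hMa i hi
    have hpos : (0:ℝ) < a n i := by linarith
    have hmpos : (0:ℝ) < a m i := by linarith
    have key : (a m i)⁻¹ ≤ M * ((a n i)⁻¹) ^ 2 := by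
      rw [inv_le_iff_one_le_mul₀' hmpos]
      have : (a n i) ^ 2 * (M * ((a n i)⁻¹) ^ 2) = M := by
        field_simp
      nlinarith [mul_le_mul_of_nonneg_right h3 (le_of_lt (by positivity : (0:ℝ) < M * ((a n i)⁻¹)^2))]
    calc (i : ℝ) ^ (2 * e) * (a m i)⁻¹
        ≤ (i : ℝ) ^ (2 * e) * (M * ((a n i)⁻¹) ^ 2) := by
          apply mul_le_mul_of_nonneg_left key (by positivity)
      _ = M * ((i : ℝ) ^ e * (a n i)⁻¹) ^ 2 := by rw [two_mul, pow_add]; ring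

/-- For a G∞-matrix satisfying (S), the following are equivalent (with `v n i = (a n i)⁻¹`):
(N); `i·v_n(i) → 0` for some `n`; `i^s·v_n(i) → 0` for some `s ≥ 1` and some `n`;
`i^s·v_n(i) → 0` for every `s ≥ 1` and a suitable `n`. -/
theorem stmt_8 (a : ℕ → ℕ → ℝ) (hA : IsGinfMatrix a)
    (hS : ∀ n, 0 < n → ∃ m, n < m ∧ Tendsto (fun i => a n i / a m i) atTop (nhds 0)) :
    List.TFAE
      [∀ n, 0 < n → ∃ m, n < m ∧ ∃ C : ℝ, ∀ i : ℕ, 0 < i →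
         (i : ℝ) * (a m i)⁻¹ / (a n i)⁻¹ ≤ C,
       ∃ n, 0 < n ∧ Tendsto (fun i : ℕ => (i : ℝ) * (a n i)⁻¹) atTop (nhds 0),
       ∃ s : ℕ, 0 < s ∧ ∃ n, 0 < n ∧
         Tendsto (fun i : ℕ => (i : ℝ) ^ s * (a n i)⁻¹) atTop (nhds 0),
       ∀ s : ℕ, 0 < s → ∃ n, 0 < n ∧
         Tendsto (fun i : ℕ => (i : ℝ) ^ s * (a n i)⁻¹) atTop (nhds 0)] := by
  tfae_have 1 → 2 := by
    intro h1
    obtain ⟨m, hm, C, hC⟩ := h1 1 one_pos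
    obtain ⟨p, hp, hSp⟩ := hS m (one_pos.trans hm)
    refine ⟨p, one_pos.trans (hm.trans hp), ?_⟩
    set C' : ℝ := max C 1 with hC'
    have hC'pos : (0:ℝ) < C' := lt_of_lt_of_le one_pos (le_max_right _ _)
    have hg : Tendsto (fun i : ℕ => C' * (a m i / a p i)) atTop (nhds 0) := by
      simpa using hSp.const_mul C'
    refine squeeze_zero' ?_ ?_ hg
    · filter_upwards [eventually_gt_atTop 0] with i hi
      have h2 : (1 : ℝ) ≤ a p i := ginf_one_le hA (one_pos.trans (hm.trans hp)) hi
      positivity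
    · filter_upwards [eventually_gt_atTop 0] with i hi
      have h1i : (1 : ℝ) ≤ a 1 i := ginf_one_le hA one_pos hi
      have h2 : (1 : ℝ) ≤ a m i := ginf_one_le hA (one_pos.trans hm) hi
      have h3 : (1 : ℝ) ≤ a p i := ginf_one_le hA (one_pos.trans (hm.trans hp)) hi
      have hCi := hC i hi
      have hm0 : (0:ℝ) < a m i := by linarith
      have hp0 : (0:ℝ) < a p i := by linarith
      have h10 : (0:ℝ) < a 1 i := by linarith
      -- hCi : i * (a m i)⁻¹ / (a 1 i)⁻¹ ≤ C, i.e. i * a 1 i / a m i ≤ C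
      have hCi' : (i : ℝ) * a 1 i ≤ C * a m i := by
        have heq : (i : ℝ) * (a m i)⁻¹ / (a 1 i)⁻¹ = (i : ℝ) * a 1 i / a m i := by
          field_simp
        rw [heq, div_le_iff₀ hm0] at hCi
        linarith
      have hi1 : (i : ℝ) ≤ C' * a m i := by
        have : (i:ℝ) ≤ (i:ℝ) * a 1 i := le_mul_of_one_le_right (by positivity) h1i
        have hCC : C * a m i ≤ C' * a m i :=
          mul_le_mul_of_nonneg_right (le_max_left _ _) hm0.le
        linarith
      rw [mul_inv_le_iff₀ hp0]
      calc (i : ℝ) ≤ C' * a m i := hi1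
        _ = C' * (a m i / a p i) * a p i := by field_simp
  tfae_have 2 → 3 := by
    rintro ⟨n, hn, h⟩
    exact ⟨1, one_pos, n, hn, by simpa using h⟩
  tfae_have 3 → 4 := by
    rintro ⟨s, hs, n, hn, h⟩ t ht
    -- iterate doubling: exponent 2^k * s
    have key : ∀ k : ℕ, ∃ n, 0 < n ∧
        Tendsto (fun i : ℕ => (i : ℝ) ^ (2 ^ k * s) * (a n i)⁻¹) atTop (nhds 0) := by
      intro k
      induction k with
      | zero => exact ⟨n, hn, by simpa using h⟩
      | succ k ih =>
        obtain ⟨n', hn', h'⟩ := ih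
        obtain ⟨m, hm, hmt⟩ := ginf_double hA (2 ^ k * s) hn' h'
        refine ⟨m, hn'.trans hm, ?_⟩
        have : 2 ^ (k + 1) * s = 2 * (2 ^ k * s) := by ring
        rw [this]; exact hmt
    obtain ⟨q, hq, hqt⟩ := key t
    refine ⟨q, hq, ?_⟩
    have hts : t ≤ 2 ^ t * s := le_trans (Nat.lt_two_pow_self (n := t)).le (Nat.le_mul_of_pos_right _ hs)
    refine squeeze_zero' ?_ ?_ hqt
    · filter_upwards [eventually_gt_atTop 0] with i hi
      have h1 : (1 : ℝ) ≤ a q i := ginf_one_le hA hq hi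
      positivity
    · filter_upwards [eventually_gt_atTop 0] with i hi
      have h1 : (1 : ℝ) ≤ a q i := ginf_one_le hA hq hi
      have hii : (1:ℝ) ≤ (i:ℝ) := by exact_mod_cast hi
      have : (i : ℝ) ^ t ≤ (i : ℝ) ^ (2 ^ t * s) := pow_le_pow_right₀ hii hts
      have hinv : (0:ℝ) ≤ (a q i)⁻¹ := by positivity
      exact mul_le_mul_of_nonneg_right this hinv
  tfae_have 4 → 1 := by
    intro h4 n hn
    obtain ⟨q, hq, hqt⟩ := h4 2 two_pos
    obtain ⟨p, hp, M, hM, hMa⟩ := hA.2.2 n hn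
    obtain ⟨B, hB⟩ := hqt.bddAbove_range
    refine ⟨max p q, lt_of_lt_of_le hp (le_max_left _ _), max 1 (M * B), ?_⟩
    intro i hi
    set m := max p q with hmdef
    have hm : 0 < m := lt_of_lt_of_le (hn.trans hp) (le_max_left _ _)
    have h1 : (1 : ℝ) ≤ a n i := ginf_one_le hA hn hi
    have h2 : (1 : ℝ) ≤ a m i := ginf_one_le hA hm hi
    have h3 : (1 : ℝ) ≤ a q i := ginf_one_le hA hq hi
    have hpm : a p i ≤ a m i := ginf_mono hA (hn.trans hp) (le_max_left _ _) hi
    have hqm : a q i ≤ a m i := ginf_mono hA hq (le_max_right _ _) hi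
    have hBq : (i : ℝ) ^ 2 * (a q i)⁻¹ ≤ B := hB ⟨i, rfl⟩
    have hn0 : (0:ℝ) < a n i := by linarith
    have hm0 : (0:ℝ) < a m i := by linarith
    have hq0 : (0:ℝ) < a q i := by linarith
    -- expr = i * a n i / a m i
    have hexpr : (i : ℝ) * (a m i)⁻¹ / (a n i)⁻¹ = (i : ℝ) * a n i / a m i := by
      field_simp
    rw [hexpr]
    set E : ℝ := (i : ℝ) * a n i / a m i with hE
    have hE0 : 0 ≤ E := by positivity
    have hi2q : (i : ℝ) ^ 2 ≤ B * a q i := by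
      have := hBq
      rw [mul_inv_le_iff₀ hq0] at this
      linarith
    have hEsq : E ^ 2 ≤ M * B := by
      have hEsq' : E ^ 2 = (i : ℝ) ^ 2 * (a n i) ^ 2 / (a m i) ^ 2 := by
        rw [hE]; ring
      rw [hEsq', div_le_iff₀ (by positivity)]
      have hstep : (i : ℝ) ^ 2 * (a n i) ^ 2 ≤ (i : ℝ) ^ 2 * (M * a m i) := by
        have hnp : (a n i) ^ 2 ≤ M * a m i :=
          le_trans (hMa i hi) (mul_le_mul_of_nonneg_left hpm hM.le)
        exact mul_le_mul_of_nonneg_left hnp (by positivity)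
      have hstep2 : (i : ℝ) ^ 2 ≤ B * a m i := by
        have : B * a q i ≤ B * a m i := by
          have hBpos : 0 ≤ B := le_trans (by positivity) hBq
          exact mul_le_mul_of_nonneg_left hqm hBpos
        linarith
      calc (i : ℝ) ^ 2 * (a n i) ^ 2 ≤ (i : ℝ) ^ 2 * (M * a m i) := hstep
        _ = M * a m i * (i : ℝ) ^ 2 := by ring
        _ ≤ M * a m i * (B * a m i) := by
            apply mul_le_mul_of_nonneg_left hstep2 (by positivity)
        _ = M * B * (a m i) ^ 2 := by ring
    rcases le_or_gt E 1 with hE1 | hE1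
    · exact le_trans hE1 (le_max_left _ _)
    · have : E ≤ E ^ 2 := by nlinarith
      exact le_trans (this.trans hEsq) (le_max_right _ _)
  tfae_finish
end
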